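/- arXiv:1711.11558 — 4 statements merged into one kernel-verified Lean document; each statement's English description precedes it below -/
import Mathlib

section
/- Let E be a σ-Dedekind complete Banach lattice (every order-bounded sequence has a supremum). Then every orthogonally additive functional Φ : E → ℝ (i.e. Φ(x + y) = Φ(x) + Φ(y) whenever |x| ⊓ |y| = 0) is a valuation: Φ(f ⊔ g) + Φ(f ⊓ g) = Φ(f) + Φ(g) for all f, g ∈ E and Φ(0) = 0. -/
/-!
Put `h = f ⊓ g`, `u = f - h`, `v = g - h`; then `u ⊥ v`, and the valuation identity reads
`Φ (h + u + v) + Φ h = Φ (h + u) + Φ (h + v)`. σ-Dedekind completeness provides the band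
projection onto the band generated by `u`, which splits `h = p + q` with `p` in that band and
`q ⊥ u`. As `v ⊥ u`, also `p ⊥ v` and `p ⊥ q`, so by orthogonal additivity each of the four
terms is a sum of a value at `q` or `q + v` and a value at `p` or `p + u`.
-/

def IsSigmaDedekindComplete (E : Type*) [Lattice E] [AddGroup E] : Prop :=
  ∀ (s : ℕ → E) (b : E), (∀ n, |s n| ≤ b) → ∃ x : E, IsLUB (Set.range s) x

section RieszSpace

variable {E : Type*} [Lattice E] [AddCommGroup E]

/-- Disjointness `x ⊥ y` of the theory of Riesz spaces. -/
def AbsDisjoint (x y : E) : Prop := |x| ⊓ |y| = 0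

/-- The principal band `{u}ᗮᗮ` generated by `u`. -/
def bandOf (u : E) : Set E := {p | ∀ w, AbsDisjoint w u → AbsDisjoint p w}

lemma AbsDisjoint.symm {x y : E} (h : AbsDisjoint x y) : AbsDisjoint y x := by
  rwa [AbsDisjoint, inf_comm]

lemma AbsDisjoint.neg_left {x y : E} (h : AbsDisjoint x y) : AbsDisjoint (-x) y := by
  rwa [AbsDisjoint, abs_neg]

variable [IsOrderedAddMonoid E]

lemma add_inf_le_inf_add_inf {a b c : E} (ha : 0 ≤ a) (hb : 0 ≤ b) (hc : 0 ≤ c) :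
    (a + b) ⊓ c ≤ a ⊓ c + b ⊓ c := by
  calc (a + b) ⊓ c ≤ (a ⊓ c + b) ⊓ (a ⊓ c + c) := by
        refine le_inf ?_ (inf_le_right.trans (le_add_of_nonneg_left (le_inf ha hc)))
        rw [inf_add]
        exact inf_le_inf_left _ (le_add_of_nonneg_right hb)
    _ = a ⊓ c + b ⊓ c := (add_inf _ _ _).symm

lemma eq_zero_of_isLUB_of_add_le {s : ℕ → E} {p d : E} (hp : IsLUB (Set.range s) p)
    (hd : 0 ≤ d) (h : ∀ n, s n + d ≤ p) : d = 0 := by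
  have : p ≤ p - d := hp.2 <| Set.forall_mem_range.2 fun n => le_sub_iff_add_le.2 (h n)
  exact le_antisymm (by simpa using this) hd

@[simp]
lemma absDisjoint_abs_right {x y : E} : AbsDisjoint x |y| ↔ AbsDisjoint x y := by
  rw [AbsDisjoint, AbsDisjoint, abs_abs]

namespace AbsDisjoint

lemma mono {x y x' y' : E} (h : AbsDisjoint x y) (hx : |x'| ≤ |x|) (hy : |y'| ≤ |y|) :
    AbsDisjoint x' y' :=
  le_antisymm (h ▸ inf_le_inf hx hy) (le_inf (abs_nonneg _) (abs_nonneg _))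

lemma add_left {x y z : E} (hx : AbsDisjoint x z) (hy : AbsDisjoint y z) :
    AbsDisjoint (x + y) z := by
  have hsum : AbsDisjoint (|x| + |y|) z := by
    rw [AbsDisjoint, abs_of_nonneg (add_nonneg (abs_nonneg x) (abs_nonneg y))]
    refine le_antisymm ?_ (le_inf (add_nonneg (abs_nonneg x) (abs_nonneg y)) (abs_nonneg z))
    calc (|x| + |y|) ⊓ |z| ≤ |x| ⊓ |z| + |y| ⊓ |z| :=
          add_inf_le_inf_add_inf (abs_nonneg x) (abs_nonneg y) (abs_nonneg z)
      _ = 0 := by rw [hx, hy, add_zero]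
  exact hsum.mono ((abs_add_le x y).trans (le_abs_self _)) le_rfl

lemma add_right {x y z : E} (hy : AbsDisjoint x y) (hz : AbsDisjoint x z) :
    AbsDisjoint x (y + z) :=
  (hy.symm.add_left hz.symm).symm

lemma sub_left {x y z : E} (hx : AbsDisjoint x z) (hy : AbsDisjoint y z) :
    AbsDisjoint (x - y) z := by
  rw [sub_eq_add_neg]
  exact hx.add_left hy.neg_left

lemma nsmul_left {x y : E} (h : AbsDisjoint x y) (n : ℕ) : AbsDisjoint (n • x) y := by
  induction n with
  | zero => simp [AbsDisjoint]
  | succ n ih => rw [succ_nsmul]; exact ih.add_left h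

lemma add_eq_sup {a b : E} (ha : 0 ≤ a) (hb : 0 ≤ b) (h : AbsDisjoint a b) : a + b = a ⊔ b := by
  rw [← inf_add_sup, show a ⊓ b = 0 by rwa [AbsDisjoint, abs_of_nonneg ha, abs_of_nonneg hb] at h,
    zero_add]

end AbsDisjoint

/-- The band projection of `y ≥ 0` onto `bandOf u` is `⨆ n, y ⊓ n • u`. -/
lemma exists_mem_bandOf_absDisjoint_sub_of_nonneg (hE : IsSigmaDedekindComplete E) {u y : E}
    (hu : 0 ≤ u) (hy : 0 ≤ y) : ∃ p ∈ bandOf u, AbsDisjoint (y - p) u := by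
  set s : ℕ → E := fun n => y ⊓ n • u
  have hs0 (n : ℕ) : 0 ≤ s n := le_inf hy (nsmul_nonneg hu n)
  obtain ⟨p, hp⟩ := hE s y fun n => (abs_of_nonneg (hs0 n)).trans_le inf_le_left
  have hsp (n : ℕ) : s n ≤ p := hp.1 ⟨n, rfl⟩
  have hpy : p ≤ y := hp.2 (Set.forall_mem_range.2 fun n => inf_le_left)
  have hp0 : 0 ≤ p := (hs0 0).trans (hsp 0)
  refine ⟨p, fun w hw => ?_, ?_⟩
  · have hpw : 0 ≤ p ⊓ |w| := le_inf hp0 (abs_nonneg w)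
    rw [AbsDisjoint, abs_of_nonneg hp0]
    refine eq_zero_of_isLUB_of_add_le hp hpw fun n => ?_
    have hdisj : AbsDisjoint (s n) (p ⊓ |w|) := (hw.symm.nsmul_left n).mono
      (by rw [abs_of_nonneg (hs0 n), abs_of_nonneg (nsmul_nonneg hu n)]; exact inf_le_right)
      (by rw [abs_of_nonneg hpw]; exact inf_le_right)
    rw [hdisj.add_eq_sup (hs0 n) hpw]
    exact sup_le (hsp n) inf_le_left
  · have hyp : 0 ≤ y - p := sub_nonneg.2 hpy
    rw [AbsDisjoint, abs_of_nonneg hyp, abs_of_nonneg hu]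
    refine eq_zero_of_isLUB_of_add_le hp (le_inf hyp hu) fun n => (le_inf ?_ ?_).trans (hsp (n + 1))
    · calc s n + (y - p) ⊓ u ≤ p + (y - p) := add_le_add (hsp n) inf_le_left
        _ = y := add_sub_cancel _ _
    · rw [succ_nsmul]
      exact add_le_add inf_le_right inf_le_right

lemma exists_mem_bandOf_absDisjoint_add_eq (hE : IsSigmaDedekindComplete E) (u y : E) :
    ∃ p ∈ bandOf u, ∃ q, AbsDisjoint q u ∧ p + q = y := by
  obtain ⟨a, ha, hau⟩ :=
    exists_mem_bandOf_absDisjoint_sub_of_nonneg hE (abs_nonneg u) (posPart_nonneg y)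
  obtain ⟨b, hb, hbu⟩ :=
    exists_mem_bandOf_absDisjoint_sub_of_nonneg hE (abs_nonneg u) (negPart_nonneg y)
  refine ⟨a - b, fun w hw => ?_, (y⁺ - a) - (y⁻ - b), ?_, ?_⟩
  · have hw' := absDisjoint_abs_right.2 hw
    exact (ha w hw').sub_left (hb w hw')
  · exact absDisjoint_abs_right.1 (hau.sub_left hbu)
  · conv_rhs => rw [← posPart_sub_negPart y]
    abel

lemma map_add_add_add_map_eq (hE : IsSigmaDedekindComplete E) {Φ : E → ℝ}
    (hΦ : ∀ x y, AbsDisjoint x y → Φ (x + y) = Φ x + Φ y) (h : E) {u v : E}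
    (huv : AbsDisjoint u v) : Φ (h + u + v) + Φ h = Φ (h + u) + Φ (h + v) := by
  obtain ⟨p, hp, q, hq, rfl⟩ := exists_mem_bandOf_absDisjoint_add_eq hE u h
  have hqp : AbsDisjoint q p := (hp q hq).symm
  have hvp : AbsDisjoint v p := (hp v huv.symm).symm
  have e₁ : Φ (p + q + u + v) = Φ (q + v) + Φ (p + u) := by
    rw [← hΦ _ _ ((hqp.add_right hq).add_left (hvp.add_right huv.symm))]
    congr 1; abel
  have e₂ : Φ (p + q) = Φ q + Φ p := by
    rw [← hΦ _ _ hqp, add_comm]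
  have e₃ : Φ (p + q + u) = Φ q + Φ (p + u) := by
    rw [← hΦ _ _ (hqp.add_right hq)]
    congr 1; abel
  have e₄ : Φ (p + q + v) = Φ (q + v) + Φ p := by
    rw [← hΦ _ _ (hqp.add_left hvp)]
    congr 1; abel
  linarith

end RieszSpace

theorem stmt3_general {E : Type*} [NormedAddCommGroup E] [Lattice E]
    [IsOrderedAddMonoid E]
    (hDed : ∀ (s : ℕ → E) (b : E), (∀ n, |s n| ≤ b) → ∃ x : E, IsLUB (Set.range s) x)
    (Φ : E → ℝ)
    (hΦ : ∀ x y : E, |x| ⊓ |y| = 0 → Φ (x + y) = Φ x + Φ y) :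
    (∀ f g : E, Φ (f ⊔ g) + Φ (f ⊓ g) = Φ f + Φ g) ∧ Φ (0 : E) = 0 := by
  refine ⟨fun f g => ?_, by simpa using hΦ 0 0 (by simp)⟩
  have huv : AbsDisjoint (f - f ⊓ g) (g - f ⊓ g) := by
    rw [AbsDisjoint, abs_of_nonneg (sub_nonneg.2 inf_le_left),
      abs_of_nonneg (sub_nonneg.2 inf_le_right), ← inf_sub, sub_self]
  have key := map_add_add_add_map_eq hDed hΦ (f ⊓ g) huv
  have hsup : f ⊓ g + (f - f ⊓ g) + (g - f ⊓ g) = f ⊔ g := by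
    rw [← add_right_inj (f ⊓ g), inf_add_sup]; abel
  rw [hsup, add_sub_cancel, add_sub_cancel] at key
  linarith

/-- On a σ-Dedekind complete Banach lattice, every orthogonally
additive functional is a valuation. -/
theorem stmt3 {E : Type*} [NormedAddCommGroup E] [Lattice E] [HasSolidNorm E]
    [IsOrderedAddMonoid E] [CompleteSpace E]
    (hDed : ∀ (s : ℕ → E) (b : E), (∀ n, |s n| ≤ b) → ∃ x : E, IsLUB (Set.range s) x)
    (Φ : E → ℝ)
    (hΦ : ∀ x y : E, |x| ⊓ |y| = 0 → Φ (x + y) = Φ x + Φ y) :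
    (∀ f g : E, Φ (f ⊔ g) + Φ (f ⊓ g) = Φ f + Φ g) ∧ Φ (0 : E) = 0 :=
  stmt3_general hDed Φ hΦ
end

section
/- Let (Ω, Σ) be a measurable space and μ, ν two finite nonatomic measures on it. If ν(A) = ν(A′) whenever μ(A) = μ(A′) (for A, A′ ∈ Σ), then there exists c ∈ ℝ such that ν(A) = c·μ(A) for every A ∈ Σ. -/
/-!
Since `μ A = μ ∅` forces `ν A = ν ∅`, we have `ν ≪ μ`, so `ν A = ∫_A f dμ` with `f = dν/dμ`.
If for some level `c < ∞` both `{f < c}` and `{f > c}` had positive `μ`-measure, Sierpiński's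
theorem would give subsets of each with the same `μ`-measure `m > 0`, whose `ν`-measures are
`< c m` and `> c m` respectively, contradicting the hypothesis. With `c = ν Ω / μ Ω` this forces
`f = c` almost everywhere, i.e. `ν = c • μ`.
-/

open MeasureTheory Set
open scoped ENNReal

namespace MeasureTheory

variable {Ω : Type*} [MeasurableSpace Ω] {μ : Measure Ω}

lemma exists_subset_forall_le_two_mul (μ : Measure Ω) (X : Set Ω) {r : ℝ≥0∞} (hr : r ≠ ∞) :
    ∃ C ⊆ X, MeasurableSet C ∧ μ C ≤ r ∧
      ∀ D ⊆ X, MeasurableSet D → μ D ≤ r → μ D ≤ 2 * μ C := by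
  set S := μ '' {D | D ⊆ X ∧ MeasurableSet D ∧ μ D ≤ r}
  have hS : ∀ D ⊆ X, MeasurableSet D → μ D ≤ r → μ D ≤ sSup S :=
    fun D hDX hD hDr => le_sSup ⟨D, ⟨hDX, hD, hDr⟩, rfl⟩
  rcases eq_or_ne (sSup S) 0 with hS0 | hS0
  · exact ⟨∅, empty_subset X, .empty, by simp,
      fun D hDX hD hDr => by simpa [hS0] using hS D hDX hD hDr⟩
  have hSr : sSup S ≠ ∞ :=
    ne_top_of_le_ne_top hr (sSup_le (by rintro _ ⟨D, ⟨-, -, hDr⟩, rfl⟩; exact hDr))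
  obtain ⟨_, ⟨C, ⟨hCX, hC, hCr⟩, rfl⟩, hSC⟩ := lt_sSup_iff.mp (ENNReal.half_lt_self hS0 hSr)
  refine ⟨C, hCX, hC, hCr, fun D hDX hD hDr => (hS D hDX hD hDr).trans ?_⟩
  rw [ENNReal.div_lt_iff (by simp) (by simp)] at hSC
  rw [mul_comm]
  exact hSC.le

lemma ae_eq_const_of_lintegral_eq {f : Ω → ℝ≥0∞} (hf : AEMeasurable f μ) {c : ℝ≥0∞}
    (hint : ∫⁻ x, f x ∂μ = c * μ univ) (hfin : c * μ univ ≠ ∞)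
    (hc : (∀ᵐ x ∂μ, c ≤ f x) ∨ ∀ᵐ x ∂μ, f x ≤ c) : f =ᵐ[μ] fun _ => c := by
  rcases hc with hc | hc
  · exact (ae_eq_of_ae_le_of_lintegral_le hc (by rwa [lintegral_const]) hf
      (by rw [lintegral_const, hint])).symm
  · exact ae_eq_of_ae_le_of_lintegral_le hc (hint ▸ hfin) aemeasurable_const
      (by rw [lintegral_const, hint])

namespace Measure

def IsNonatomic (μ : Measure Ω) : Prop :=
  ∀ A : Set Ω, MeasurableSet A → 0 < μ A → ∃ B ⊆ A, MeasurableSet B ∧ 0 < μ B ∧ μ B < μ A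

namespace IsNonatomic

variable (hμ : μ.IsNonatomic)
include hμ

lemma exists_subset_two_mul_le {A : Set Ω} (hA : MeasurableSet A) (h0 : 0 < μ A) :
    ∃ B ⊆ A, MeasurableSet B ∧ 0 < μ B ∧ 2 * μ B ≤ μ A := by
  obtain ⟨B, hBA, hB, hB0, hBlt⟩ := hμ A hA h0
  have hsum : μ B + μ (A \ B) = μ A := by
    rw [measure_add_sdiff hB.nullMeasurableSet, union_eq_right.mpr hBA]
  have hAB0 : 0 < μ (A \ B) := by
    refine pos_iff_ne_zero.mpr fun hAB => hBlt.ne ?_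
    rwa [hAB, add_zero] at hsum
  rcases le_total (μ B) (μ (A \ B)) with hle | hle
  · exact ⟨B, hBA, hB, hB0, by rw [two_mul, ← hsum]; gcongr⟩
  · exact ⟨A \ B, sdiff_subset, hA.diff hB, hAB0, by rw [two_mul, ← hsum]; gcongr⟩

lemma exists_subset_pos_lt [IsFiniteMeasure μ] {A : Set Ω} (hA : MeasurableSet A) (h0 : 0 < μ A)
    {ε : ℝ≥0∞} (hε : ε ≠ 0) : ∃ B ⊆ A, MeasurableSet B ∧ 0 < μ B ∧ μ B < ε := by
  have halve : ∀ n : ℕ, ∃ B ⊆ A, MeasurableSet B ∧ 0 < μ B ∧ 2 ^ n * μ B ≤ μ A := by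
    intro n
    induction n with
    | zero => exact ⟨A, subset_rfl, hA, h0, by simp⟩
    | succ n ih =>
      obtain ⟨B, hBA, hB, hB0, hBle⟩ := ih
      obtain ⟨C, hCB, hC, hC0, hCle⟩ := hμ.exists_subset_two_mul_le hB hB0
      refine ⟨C, hCB.trans hBA, hC, hC0, ?_⟩
      calc 2 ^ (n + 1) * μ C = 2 ^ n * (2 * μ C) := by ring
        _ ≤ 2 ^ n * μ B := by gcongr
        _ ≤ μ A := hBle
  obtain ⟨n, hn⟩ := ENNReal.exists_nat_mul_gt hε (measure_ne_top μ A)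
  obtain ⟨B, hBA, hB, hB0, hBle⟩ := halve n
  have hlt : 2 ^ n * μ B < 2 ^ n * ε :=
    calc 2 ^ n * μ B ≤ μ A := hBle
      _ < n * ε := hn
      _ ≤ 2 ^ n * ε := by gcongr; exact_mod_cast Nat.lt_two_pow_self.le
  exact ⟨B, hBA, hB, hB0, lt_of_mul_lt_mul_left hlt zero_le⟩

theorem exists_subset_measure_eq [IsFiniteMeasure μ] {A : Set Ω} (hA : MeasurableSet A)
    {a : ℝ≥0∞} (ha : a ≤ μ A) : ∃ B ⊆ A, MeasurableSet B ∧ μ B = a := by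
  have hatop : a ≠ ∞ := ne_top_of_le_ne_top (measure_ne_top μ A) ha
  -- Greedy exhaustion: `F (n + 1)` adds to `F n` at least half of the largest mass that fits
  -- into `A \ F n` without exceeding `a`.
  choose step hstepA hstep hstepa hstepmax using fun B : Set Ω =>
    exists_subset_forall_le_two_mul μ (A \ B) (ne_top_of_le_ne_top hatop (tsub_le_self (b := μ B)))
  let F : ℕ → Set Ω := fun n => Nat.rec ∅ (fun _ B => B ∪ step B) n
  have hF_succ : ∀ n, F (n + 1) = F n ∪ step (F n) := fun n => rfl
  have hF : ∀ n, F n ⊆ A ∧ MeasurableSet (F n) ∧ μ (F n) ≤ a := by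
    intro n
    induction n with
    | zero => exact ⟨empty_subset A, .empty, by simp [F]⟩
    | succ n ih =>
      obtain ⟨hFA, hFm, hFa⟩ := ih
      refine ⟨union_subset hFA ((hstepA _).trans sdiff_subset), hFm.union (hstep _), ?_⟩
      calc μ (F (n + 1)) ≤ μ (F n) + μ (step (F n)) := measure_union_le _ _
        _ ≤ μ (F n) + (a - μ (F n)) := by gcongr; exact hstepa _
        _ = a := add_tsub_cancel_of_le hFa
  have hF_mono : Monotone F := monotone_nat_of_le_succ fun n => subset_union_left
  refine ⟨⋃ n, F n, iUnion_subset fun n => (hF n).1, .iUnion fun n => (hF n).2.1, ?_⟩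
  have hBa : μ (⋃ n, F n) ≤ a := by
    rw [hF_mono.measure_iUnion]
    exact iSup_le fun n => (hF n).2.2
  refine le_antisymm hBa (not_lt.mp fun hlt => ?_)
  -- A set `D` missed by the construction forces every greedy step to have measure `≥ μ D / 2`.
  have hgap : 0 < a - μ (⋃ n, F n) := tsub_pos_of_lt hlt
  obtain ⟨D, hDA, hD, hD0, hDlt⟩ := hμ.exists_subset_pos_lt (hA.diff (.iUnion fun n => (hF n).2.1))
    (hgap.trans_le ((tsub_le_tsub_right ha _).trans le_measure_sdiff)) hgap.ne'
  have hD_le : ∀ n, μ D ≤ 2 * μ (step (F n)) := fun n =>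
    hstepmax _ D (hDA.trans (sdiff_subset_sdiff_right (subset_iUnion F n))) hD
      (hDlt.le.trans (tsub_le_tsub_left (measure_mono (subset_iUnion F n)) a))
  have hgrow : ∀ n : ℕ, n * μ D ≤ 2 * μ (F n) := by
    intro n
    induction n with
    | zero => simp
    | succ n ih =>
      rw [hF_succ, measure_union (disjoint_sdiff_right.mono_right (hstepA _)) (hstep _)]
      push_cast
      calc (n + 1) * μ D = n * μ D + μ D := by ring
        _ ≤ 2 * μ (F n) + 2 * μ (step (F n)) := add_le_add ih (hD_le n)
        _ = 2 * (μ (F n) + μ (step (F n))) := by ring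
  have h2a : (2 : ℝ≥0∞) * a ≠ ∞ := ENNReal.mul_ne_top ENNReal.ofNat_ne_top hatop
  obtain ⟨n, hn⟩ := ENNReal.exists_nat_mul_gt hD0.ne' h2a
  exact (hn.trans_le (hgrow n)).not_ge (by gcongr; exact (hF n).2.2)

lemma ae_le_or_ae_ge_of_setLIntegral_eq [IsFiniteMeasure μ] {f : Ω → ℝ≥0∞} (hf : Measurable f)
    (hfi : ∫⁻ x, f x ∂μ ≠ ∞)
    (h : ∀ A A' : Set Ω, MeasurableSet A → MeasurableSet A' → μ A = μ A' →
      ∫⁻ x in A, f x ∂μ = ∫⁻ x in A', f x ∂μ)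
    {c : ℝ≥0∞} (hc : c ≠ ∞) : (∀ᵐ x ∂μ, c ≤ f x) ∨ ∀ᵐ x ∂μ, f x ≤ c := by
  simp only [ae_iff, not_le]
  by_contra! hpos
  set m := min (μ {x | f x < c}) (μ {x | c < f x})
  have hm : m ≠ 0 := by simp [m, hpos.1, hpos.2]
  obtain ⟨A, hAlow, hA, hAm⟩ := hμ.exists_subset_measure_eq
    (measurableSet_lt hf measurable_const : MeasurableSet {x | f x < c}) (a := m) (min_le_left _ _)
  obtain ⟨B, hBhigh, hB, hBm⟩ := hμ.exists_subset_measure_eq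
    (measurableSet_lt measurable_const hf : MeasurableSet {x | c < f x}) (a := m) (min_le_right _ _)
  have hAc : ∫⁻ x in A, f x ∂μ < c * m := by
    rw [← hAm, ← setLIntegral_const]
    exact setLIntegral_strict_mono hA (hAm ▸ hm) measurable_const
      (ne_top_of_le_ne_top hfi (setLIntegral_le_lintegral A f)) (ae_of_all _ fun x hx => hAlow hx)
  have hBc : c * m < ∫⁻ x in B, f x ∂μ := by
    rw [← hBm, ← setLIntegral_const]
    refine setLIntegral_strict_mono hB (hBm ▸ hm) hf ?_ (ae_of_all _ fun x hx => hBhigh hx)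
    rw [setLIntegral_const]
    exact ENNReal.mul_ne_top hc (measure_ne_top μ B)
  exact (hAc.trans hBc).ne (h A B hA hB (hAm.trans hBm.symm))

end IsNonatomic

end Measure

end MeasureTheory

theorem stmt10_general {Ω : Type*} [MeasurableSpace Ω] (μ ν : Measure Ω)
    [IsFiniteMeasure μ] [IsFiniteMeasure ν]
    (hμna : ∀ A : Set Ω, MeasurableSet A → 0 < μ A →
      ∃ B ⊆ A, MeasurableSet B ∧ 0 < μ B ∧ μ B < μ A)
    (h : ∀ A A' : Set Ω, MeasurableSet A → MeasurableSet A' →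
      μ A = μ A' → ν A = ν A') :
    ∃ c : NNReal, ∀ A : Set Ω, MeasurableSet A → ν A = c * μ A := by
  have hac : ν ≪ μ := Measure.AbsolutelyContinuous.mk fun A hA hA0 => by
    rw [h A ∅ hA .empty (by rw [hA0, measure_empty]), measure_empty]
  have hνA : ∀ A, ∫⁻ x in A, ν.rnDeriv μ x ∂μ = ν A := Measure.setLIntegral_rnDeriv hac
  rcases eq_or_ne (μ univ) 0 with hμ0 | hμ0
  · exact ⟨0, fun A _ => by simp [hac (measure_mono_null (subset_univ A) hμ0)]⟩
  set c := ν univ / μ univ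
  have hc : c ≠ ∞ := ENNReal.div_ne_top (measure_ne_top ν univ) hμ0
  have hint : ∫⁻ x, ν.rnDeriv μ x ∂μ = c * μ univ := by
    rw [← setLIntegral_univ, hνA, ENNReal.div_mul_cancel hμ0 (measure_ne_top μ univ)]
  have hfin : c * μ univ ≠ ∞ := ENNReal.mul_ne_top hc (measure_ne_top μ univ)
  have hμ : μ.IsNonatomic := hμna
  have hconst : ν.rnDeriv μ =ᵐ[μ] fun _ => c :=
    ae_eq_const_of_lintegral_eq (Measure.measurable_rnDeriv ν μ).aemeasurable hint hfin <|
      hμ.ae_le_or_ae_ge_of_setLIntegral_eq (Measure.measurable_rnDeriv ν μ) (hint ▸ hfin)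
        (fun A A' hA hA' hAA' => by rw [hνA, hνA, h A A' hA hA' hAA']) hc
  refine ⟨c.toNNReal, fun A _ => ?_⟩
  rw [ENNReal.coe_toNNReal hc, ← hνA, lintegral_congr_ae (ae_restrict_of_ae hconst),
    setLIntegral_const]

/-- If `μ, ν` are finite nonatomic measures and `ν(A) = ν(A')`
whenever `μ(A) = μ(A')`, then `ν = c·μ` for some constant `c`. -/
theorem stmt10 {Ω : Type*} [MeasurableSpace Ω] (μ ν : Measure Ω)
    [IsFiniteMeasure μ] [IsFiniteMeasure ν]
    (hμna : ∀ A : Set Ω, MeasurableSet A → 0 < μ A →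
      ∃ B ⊆ A, MeasurableSet B ∧ 0 < μ B ∧ μ B < μ A)
    (hνna : ∀ A : Set Ω, MeasurableSet A → 0 < ν A →
      ∃ B ⊆ A, MeasurableSet B ∧ 0 < ν B ∧ ν B < ν A)
    (h : ∀ A A' : Set Ω, MeasurableSet A → MeasurableSet A' →
      μ A = μ A' → ν A = ν A') :
    ∃ c : NNReal, ∀ A : Set Ω, MeasurableSet A → ν A = c * μ A :=
  stmt10_general μ ν hμna h
end

section
/- The map V : c₀₊ → ℝ₊ defined on nonnegative sequences x = (xₙ) converging to 0 by V(x) = Σₙ n·xₙⁿ is well-defined (the series converges), satisfies the valuation equation V(x ⊔ y) + V(x ⊓ y) = V(x) + V(y) for all x, y ∈ c₀₊, is continuous with respect to the sup norm, and satisfies V(eₙ) = n for each standard unit vector eₙ. In particular V is a continuous valuation on c₀₊ that is unbounded on the unit ball. -/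
/-!
Eventually `|xₙ| ≤ 1/2`, so `∑ n xₙⁿ` is dominated by `∑ n 2⁻ⁿ`. Near a fixed `x₀`, the terms are
dominated by `n (|x₀ₙ| + 1/4)ⁿ`, a summable majorant of the same kind, so the Weierstrass M-test
gives continuity. The valuation equation holds termwise, since `{max a b, min a b} = {a, b}`.
-/

open ZeroAtInfty Filter Topology

namespace ZeroAtInftyContinuousMap

variable {α β : Type*} [TopologicalSpace α] [PseudoMetricSpace β] [Zero β]

theorem dist_apply_le (f g : C₀(α, β)) (a : α) : dist (f a) (g a) ≤ dist f g := by
  rw [← dist_toBCF_eq_dist]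
  exact BoundedContinuousFunction.dist_coe_le_dist (f := f.toBCF) (g := g.toBCF) a

theorem lipschitz_eval_const (a : α) : LipschitzWith 1 fun f : C₀(α, β) => f a :=
  LipschitzWith.of_dist_le_mul fun f g => by simpa using dist_apply_le f g a

end ZeroAtInftyContinuousMap

theorem ZeroAtInftyContinuousMap.tendsto_atTop_zero {β : Type*} [TopologicalSpace β] [Zero β]
    (x : C₀(ℕ, β)) : Tendsto x atTop (𝓝 0) :=
  cocompact_eq_atTop (α := ℕ) ▸ zero_at_infty x

theorem map_max_add_map_min {α β : Type*} [LinearOrder α] [AddCommSemigroup β] (f : α → β)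
    (a b : α) : f (max a b) + f (min a b) = f a + f b := by
  rcases le_total a b with h | h
  · rw [max_eq_right h, min_eq_left h, add_comm]
  · rw [max_eq_left h, min_eq_right h]

theorem summable_natCast_mul_pow_of_eventually_abs_le {f : ℕ → ℝ} {r : ℝ} (hr : r < 1)
    (hf : ∀ᶠ n in atTop, |f n| ≤ r) : Summable fun n : ℕ => (n : ℝ) * f n ^ n := by
  obtain ⟨m, hm⟩ := hf.exists
  have hr₀ : 0 ≤ r := (abs_nonneg _).trans hm
  have hgeom : Summable fun n : ℕ => (n : ℝ) * r ^ n := by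
    simpa using summable_pow_mul_geometric_of_norm_lt_one (R := ℝ) 1
      (by rwa [Real.norm_of_nonneg hr₀])
  refine hgeom.of_norm_bounded_eventually ?_
  rw [Nat.cofinite_eq_atTop]
  filter_upwards [hf] with n hn
  rw [norm_mul, norm_pow, Real.norm_natCast, Real.norm_eq_abs]
  gcongr

theorem summable_natCast_mul_pow_of_tendsto_zero {f : ℕ → ℝ} (hf : Tendsto f atTop (𝓝 0)) :
    Summable fun n : ℕ => (n : ℝ) * f n ^ n :=
  summable_natCast_mul_pow_of_eventually_abs_le (r := 1 / 2) (by norm_num) <|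
    (tendsto_zero_iff_abs_tendsto_zero f).mp hf |>.eventually_le_const (by norm_num)

theorem continuous_tsum_natCast_mul_pow :
    Continuous fun x : C₀(ℕ, ℝ) => ∑' n : ℕ, (n : ℝ) * x n ^ n := by
  refine continuous_iff_continuousAt.mpr fun x₀ => ?_
  have hu : Summable fun n : ℕ => (n : ℝ) * (|x₀ n| + 1 / 4) ^ n := by
    refine summable_natCast_mul_pow_of_eventually_abs_le (r := 1 / 2) (by norm_num) ?_
    have hlim : Tendsto (fun n => |x₀ n| + 1 / 4) atTop (𝓝 (0 + 1 / 4)) :=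
      ((tendsto_zero_iff_abs_tendsto_zero _).mp x₀.tendsto_atTop_zero).add_const _
    filter_upwards [hlim.eventually_le_const (show (0 : ℝ) + 1 / 4 < 1 / 2 by norm_num)] with n hn
    rwa [abs_of_nonneg (by positivity)]
  have hbound : ∀ n : ℕ, ∀ x ∈ Metric.ball x₀ (1 / 4),
      ‖(n : ℝ) * x n ^ n‖ ≤ n * (|x₀ n| + 1 / 4) ^ n := by
    intro n x hx
    have hxn : |x n| ≤ |x₀ n| + 1 / 4 := calc
      |x n| ≤ |x₀ n| + |x n - x₀ n| := by linarith [abs_sub_abs_le_abs_sub (x n) (x₀ n)]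
      _ ≤ |x₀ n| + 1 / 4 := by
        rw [← Real.dist_eq]
        linarith [x.dist_apply_le x₀ n, Metric.mem_ball.mp hx]
    rw [norm_mul, norm_pow, Real.norm_natCast, Real.norm_eq_abs]
    gcongr
  have hcont (n : ℕ) : Continuous fun x : C₀(ℕ, ℝ) => (n : ℝ) * x n ^ n :=
    continuous_const.mul ((ZeroAtInftyContinuousMap.lipschitz_eval_const n).continuous.pow n)
  exact (continuousOn_tsum (fun n => (hcont n).continuousOn) hu hbound).continuousAt
    (Metric.ball_mem_nhds x₀ (by norm_num))

/-- `V x = Σₙ n·xₙⁿ` is a well-defined continuous valuation on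
the positive cone of `c₀` with `V eₙ = n` (hence unbounded on the unit ball). -/
theorem stmt12 (V : C₀(ℕ, ℝ) → ℝ) (hVdef : ∀ x : C₀(ℕ, ℝ), V x = ∑' n : ℕ, (n : ℝ) * (x n) ^ n) :
    (∀ x : C₀(ℕ, ℝ), (∀ n, 0 ≤ x n) → Summable (fun n : ℕ => (n : ℝ) * (x n) ^ n)) ∧
    (∀ x y : C₀(ℕ, ℝ), (∀ n, 0 ≤ x n) → (∀ n, 0 ≤ y n) →
      (∑' n : ℕ, (n : ℝ) * (max (x n) (y n)) ^ n) +
        (∑' n : ℕ, (n : ℝ) * (min (x n) (y n)) ^ n) = V x + V y) ∧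
    ContinuousOn V {x : C₀(ℕ, ℝ) | ∀ n, 0 ≤ x n} ∧
    (∀ (N : ℕ) (e : C₀(ℕ, ℝ)), (∀ n, e n = if n = N then 1 else 0) → V e = N) := by
  have hsum (x : C₀(ℕ, ℝ)) := summable_natCast_mul_pow_of_tendsto_zero x.tendsto_atTop_zero
  have hV : V = fun x : C₀(ℕ, ℝ) => ∑' n : ℕ, (n : ℝ) * x n ^ n := funext hVdef
  refine ⟨fun x _ => hsum x, fun x y _ _ => ?_, ?_, fun N e he => ?_⟩
  · have hx := x.tendsto_atTop_zero
    have hy := y.tendsto_atTop_zero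
    rw [hVdef, hVdef, ← (hsum x).tsum_add (hsum y),
      ← (summable_natCast_mul_pow_of_tendsto_zero (by simpa using hx.max hy)).tsum_add
        (summable_natCast_mul_pow_of_tendsto_zero (by simpa using hx.min hy))]
    exact tsum_congr fun n => map_max_add_map_min (fun t => (n : ℝ) * t ^ n) (x n) (y n)
  · exact hV ▸ continuous_tsum_natCast_mul_pow.continuousOn
  · have hterm (n : ℕ) : (n : ℝ) * e n ^ n = if n = N then (N : ℝ) else 0 := by
      rw [he n]
      split_ifs with h
      · simp [h]
      · rcases eq_or_ne n 0 with rfl | h0 <;> simp [*]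
    simp only [hVdef, hterm, tsum_ite_eq]
end

section
/- Let E be a Banach lattice of measurable functions over a purely nonatomic σ-finite measure space, order continuous, satisfying a lower q-estimate with constant 1 for some q < ∞ (i.e. ‖Σᵢ fᵢ‖^q ≥ Σᵢ ‖fᵢ‖^q for pairwise disjoint fᵢ). If V : E → ℝ is a valuation continuous at 0, with |V(f)| ≤ 1 whenever ‖f‖ ≤ δ, then for every f ∈ E, |V(f)| ≤ (‖f‖/δ)^q + 2. In particular V is bounded on norm-bounded sets. -/
/-!
Writing `f = f⁺ - f⁻`, a valuation satisfies `V f = V f⁺ + V (-f⁻)` and the lower estimate gives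
`‖f⁺‖ ^ q + ‖f⁻‖ ^ q ≤ ‖f‖ ^ q`, so it suffices to show `|V g| ≤ (‖g‖ / δ) ^ q + 1` for `g ≥ 0`.
If `‖g‖ > δ`, split `g = g₁ + g₂` into disjoint positive parts with `‖g₁‖ = δ`; then
`V g = V g₁ + V g₂` and `(‖g₂‖ / δ) ^ q ≤ (‖g‖ / δ) ^ q - 1`, and we induct.

The splitting is an intermediate value property of `ν A = ‖1_A g‖`. By order continuity `ν` is a
Maharam submeasure, it inherits the lower `q`-estimate on disjoint sets, and it has no atoms
because `μ` has none. A greedy exhaustion then reaches every value in `[0, ‖g‖]`: each step adds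
a disjoint piece of at least half the largest size still admissible, the lower estimate forces
these sizes to zero, and a gap below the target would leave room for a piece of fixed size.
-/

open MeasureTheory Filter Topology Set

section Submeasure

variable {Ω : Type*} [MeasurableSpace Ω] {ν : Set Ω → ℝ} {q : ℝ}

lemma exists_subset_two_mul_rpow_le (hq : 0 < q)
    (hlow : ∀ ⦃A B⦄, MeasurableSet A → MeasurableSet B → Disjoint A B →
      ν A ^ q + ν B ^ q ≤ ν (A ∪ B) ^ q)
    (hsplit : ∀ ⦃A⦄, MeasurableSet A → 0 < ν A →
      ∃ B ⊆ A, MeasurableSet B ∧ 0 < ν B ∧ 0 < ν (A \ B))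
    {A : Set Ω} (hA : MeasurableSet A) (hpos : 0 < ν A) :
    ∃ C ⊆ A, MeasurableSet C ∧ 0 < ν C ∧ 2 * ν C ^ q ≤ ν A ^ q := by
  obtain ⟨B, hBA, hB, hBpos, hABpos⟩ := hsplit hA hpos
  have hsum := hlow hB (hA.diff hB) disjoint_sdiff_right
  rw [union_sdiff_cancel hBA] at hsum
  rcases le_total (ν B) (ν (A \ B)) with hle | hle
  · have := Real.rpow_le_rpow hBpos.le hle hq.le
    exact ⟨B, hBA, hB, hBpos, by linarith⟩
  · have := Real.rpow_le_rpow hABpos.le hle hq.le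
    exact ⟨A \ B, sdiff_subset, hA.diff hB, hABpos, by linarith⟩

lemma exists_subset_pos_le (hq : 0 < q)
    (hlow : ∀ ⦃A B⦄, MeasurableSet A → MeasurableSet B → Disjoint A B →
      ν A ^ q + ν B ^ q ≤ ν (A ∪ B) ^ q)
    (hsplit : ∀ ⦃A⦄, MeasurableSet A → 0 < ν A →
      ∃ B ⊆ A, MeasurableSet B ∧ 0 < ν B ∧ 0 < ν (A \ B))
    {A : Set Ω} (hA : MeasurableSet A) (hpos : 0 < ν A) {ε : ℝ} (hε : 0 < ε) :
    ∃ C ⊆ A, MeasurableSet C ∧ 0 < ν C ∧ ν C ≤ ε := by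
  have hiter : ∀ n : ℕ, ∃ C ⊆ A, MeasurableSet C ∧ 0 < ν C ∧ 2 ^ n * ν C ^ q ≤ ν A ^ q := by
    intro n
    induction n with
    | zero => exact ⟨A, subset_rfl, hA, hpos, by simp⟩
    | succ n ih =>
      obtain ⟨B, hBA, hB, hBpos, hBle⟩ := ih
      obtain ⟨C, hCB, hC, hCpos, hCle⟩ :=
        exists_subset_two_mul_rpow_le hq hlow hsplit hB hBpos
      refine ⟨C, hCB.trans hBA, hC, hCpos, ?_⟩
      rw [pow_succ']
      nlinarith [pow_pos (two_pos : (0 : ℝ) < 2) n]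
  obtain ⟨n, hn⟩ := pow_unbounded_of_one_lt (ν A ^ q / ε ^ q) one_lt_two
  obtain ⟨C, hCA, hC, hCpos, hCle⟩ := hiter n
  refine ⟨C, hCA, hC, hCpos, (Real.rpow_le_rpow_iff hCpos.le hε.le hq).1 ?_⟩
  rw [div_lt_iff₀ (Real.rpow_pos_of_pos hε q)] at hn
  exact le_of_mul_le_mul_left (by linarith) (pow_pos two_pos n)

structure IsMaharamSubmeasure (ν : Set Ω → ℝ) : Prop where
  empty : ν ∅ = 0
  mono : ∀ ⦃A B⦄, MeasurableSet A → MeasurableSet B → A ⊆ B → ν A ≤ ν B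
  union_le : ∀ ⦃A B⦄, MeasurableSet A → MeasurableSet B → ν (A ∪ B) ≤ ν A + ν B
  tendsto_zero : ∀ ⦃B : ℕ → Set Ω⦄, (∀ n, MeasurableSet (B n)) → Antitone B →
    ⋂ n, B n = ∅ → Tendsto (fun n => ν (B n)) atTop (𝓝 0)

namespace IsMaharamSubmeasure

lemma nonneg (hν : IsMaharamSubmeasure ν) {A : Set Ω} (hA : MeasurableSet A) : 0 ≤ ν A :=
  hν.empty ▸ hν.mono .empty hA (empty_subset A)

/-- The lower estimate bounds `∑ n < m, ν (A (n + 1) \ A n) ^ q` by `ν univ ^ q` for every `m`. -/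
lemma exists_diff_succ_lt (hν : IsMaharamSubmeasure ν) (hq : 0 < q)
    (hlow : ∀ ⦃A B⦄, MeasurableSet A → MeasurableSet B → Disjoint A B →
      ν A ^ q + ν B ^ q ≤ ν (A ∪ B) ^ q)
    {A : ℕ → Set Ω} (hA : ∀ n, MeasurableSet (A n)) (hmono : Monotone A) {c : ℝ} (hc : 0 < c) :
    ∃ n, ν (A (n + 1) \ A n) < c := by
  by_contra! hge
  have hsum : ∀ m : ℕ, m * c ^ q ≤ ν (A m) ^ q := by
    intro m
    induction m with
    | zero => simpa using Real.rpow_nonneg (hν.nonneg (hA 0)) q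
    | succ m ih =>
      have hstep := hlow (hA m) ((hA (m + 1)).diff (hA m)) disjoint_sdiff_right
      rw [union_sdiff_cancel (hmono m.le_succ)] at hstep
      have := Real.rpow_le_rpow hc.le (hge m) hq.le
      push_cast
      linarith
  obtain ⟨m, hm⟩ := exists_nat_gt (ν univ ^ q / c ^ q)
  have hbound : ν (A m) ^ q ≤ ν univ ^ q :=
    Real.rpow_le_rpow (hν.nonneg (hA m)) (hν.mono (hA m) .univ (subset_univ _)) hq.le
  rw [div_lt_iff₀ (Real.rpow_pos_of_pos hc q)] at hm
  linarith [hsum m]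

lemma exists_greedy_step (hν : IsMaharamSubmeasure ν) {τ : ℝ} {B : Set Ω}
    (hB : MeasurableSet B) (hBτ : ν B ≤ τ) :
    ∃ B', MeasurableSet B' ∧ B ⊆ B' ∧ ν B' ≤ τ ∧
      ∀ D, MeasurableSet D → Disjoint B D → ν (B ∪ D) ≤ τ → ν D ≤ 2 * ν (B' \ B) := by
  set S := ν '' {D | MeasurableSet D ∧ Disjoint B D ∧ ν (B ∪ D) ≤ τ}
  have hS : BddAbove S := ⟨ν univ, by
    rintro _ ⟨D, ⟨hD, -⟩, rfl⟩
    exact hν.mono hD .univ (subset_univ D)⟩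
  have hSD : ∀ D, MeasurableSet D → Disjoint B D → ν (B ∪ D) ≤ τ → ν D ≤ sSup S :=
    fun D hD hBD hτ => le_csSup hS ⟨D, ⟨hD, hBD, hτ⟩, rfl⟩
  have h0 : ν ∅ ∈ S := ⟨∅, ⟨.empty, disjoint_empty B, by rwa [union_empty]⟩, rfl⟩
  rcases (le_csSup hS h0).eq_or_lt with hsup | hsup
  · refine ⟨B, hB, subset_rfl, hBτ, fun D hD hBD hτ => ?_⟩
    rw [sdiff_self, hν.empty, mul_zero, ← hν.empty, hsup]
    exact hSD D hD hBD hτ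
  · rw [hν.empty] at hsup
    obtain ⟨_, ⟨D₀, ⟨hD₀, hBD₀, hτ₀⟩, rfl⟩, hD₀lt⟩ :=
      exists_lt_of_lt_csSup ⟨_, h0⟩ (half_lt_self hsup)
    refine ⟨B ∪ D₀, hB.union hD₀, subset_union_left, hτ₀, fun D hD hBD hτ => ?_⟩
    rw [union_sdiff_cancel_left hBD₀.le_bot]
    linarith [hSD D hD hBD hτ]

lemma apply_iUnion_le (hν : IsMaharamSubmeasure ν) {A : ℕ → Set Ω}
    (hA : ∀ n, MeasurableSet (A n)) (hmono : Monotone A) {τ : ℝ} (hτ : ∀ n, ν (A n) ≤ τ) :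
    ν (⋃ n, A n) ≤ τ := by
  have hU : MeasurableSet (⋃ n, A n) := .iUnion hA
  have hrest : Tendsto (fun n => ν ((⋃ n, A n) \ A n)) atTop (𝓝 0) := by
    refine hν.tendsto_zero (fun n => hU.diff (hA n))
      (fun m n hmn => sdiff_subset_sdiff_right (hmono hmn)) ?_
    refine eq_empty_of_forall_notMem fun ω hω => ?_
    obtain ⟨n, hn⟩ := mem_iUnion.1 (mem_iInter.1 hω 0).1
    exact (mem_iInter.1 hω n).2 hn
  refine le_of_tendsto_of_tendsto' tendsto_const_nhds (by simpa using hrest.const_add τ) fun n => ?_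
  calc ν (⋃ n, A n) = ν (A n ∪ (⋃ n, A n) \ A n) := by
        rw [union_sdiff_self, union_eq_right.2 (subset_iUnion A n)]
    _ ≤ ν (A n) + ν ((⋃ n, A n) \ A n) := hν.union_le (hA n) (hU.diff (hA n))
    _ ≤ τ + ν ((⋃ n, A n) \ A n) := by linarith [hτ n]

theorem exists_apply_eq (hν : IsMaharamSubmeasure ν) (hq : 0 < q)
    (hlow : ∀ ⦃A B⦄, MeasurableSet A → MeasurableSet B → Disjoint A B →
      ν A ^ q + ν B ^ q ≤ ν (A ∪ B) ^ q)
    (hsplit : ∀ ⦃A⦄, MeasurableSet A → 0 < ν A →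
      ∃ B ⊆ A, MeasurableSet B ∧ 0 < ν B ∧ 0 < ν (A \ B))
    {τ : ℝ} (hτ0 : 0 ≤ τ) (hτ : τ ≤ ν univ) :
    ∃ U, MeasurableSet U ∧ ν U = τ := by
  choose! next hnext using fun B => hν.exists_greedy_step (τ := τ) (B := B)
  set A : ℕ → Set Ω := fun n => next^[n] ∅
  have hAsucc : ∀ n, A (n + 1) = next (A n) := fun n => Function.iterate_succ_apply' next n ∅
  have hA : ∀ n, MeasurableSet (A n) ∧ ν (A n) ≤ τ := by
    intro n
    induction n with
    | zero => exact ⟨.empty, hν.empty ▸ hτ0⟩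
    | succ n ih => rw [hAsucc]; exact ⟨(hnext _ ih.1 ih.2).1, (hnext _ ih.1 ih.2).2.2.1⟩
  have hmono : Monotone A := monotone_nat_of_le_succ fun n => by
    rw [hAsucc]; exact (hnext _ (hA n).1 (hA n).2).2.1
  set U := ⋃ n, A n
  have hU : MeasurableSet U := .iUnion fun n => (hA n).1
  refine ⟨U, hU, le_antisymm (hν.apply_iUnion_le (fun n => (hA n).1) hmono fun n => (hA n).2) ?_⟩
  by_contra! hlt
  have hUc : 0 < ν Uᶜ := by
    have := hν.union_le hU hU.compl
    rw [union_compl_self] at this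
    linarith
  obtain ⟨C, hCU, hC, hCpos, hCle⟩ :=
    exists_subset_pos_le hq hlow hsplit hU.compl hUc (sub_pos.2 hlt)
  obtain ⟨n, hn⟩ := hν.exists_diff_succ_lt hq hlow (fun n => (hA n).1) hmono (half_pos hCpos)
  have hdisj : Disjoint (A n) C :=
    subset_compl_iff_disjoint_left.1 (hCU.trans (compl_subset_compl.2 (subset_iUnion A n)))
  have hAnC : ν (A n ∪ C) ≤ τ := by
    have := hν.mono (hA n).1 hU (subset_iUnion A n)
    linarith [hν.union_le (hA n).1 hC]
  have := (hnext _ (hA n).1 (hA n).2).2.2.2 C hC hdisj hAnC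
  rw [← hAsucc] at this
  linarith

end IsMaharamSubmeasure

end Submeasure

section IdealEmbedding

variable {Ω : Type*} [MeasurableSpace Ω] {μ : Measure Ω}
  {E : Type*} [NormedAddCommGroup E] [Lattice E] [NormedSpace ℝ E]

structure IsIdealEmbedding (T : E →ₗ[ℝ] (Ω →ₘ[μ] ℝ)) : Prop where
  injective : Function.Injective T
  map_sup : ∀ f g, T (f ⊔ g) = T f ⊔ T g
  map_inf : ∀ f g, T (f ⊓ g) = T f ⊓ T g
  exists_eq_of_abs_le : ∀ (u : Ω →ₘ[μ] ℝ) (f : E), |u| ≤ |T f| → ∃ h, T h = u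

namespace IsIdealEmbedding

variable {T : E →ₗ[ℝ] (Ω →ₘ[μ] ℝ)}

lemma ae_eq_iff (hT : IsIdealEmbedding T) {a b : E} : ⇑(T a) =ᵐ[μ] ⇑(T b) ↔ a = b := by
  rw [← AEEqFun.ext_iff, hT.injective.eq_iff]

lemma ae_le_iff (hT : IsIdealEmbedding T) {a b : E} : ⇑(T a) ≤ᵐ[μ] ⇑(T b) ↔ a ≤ b := by
  rw [AEEqFun.coeFn_le, ← sup_eq_right, ← sup_eq_right, ← hT.map_sup, hT.injective.eq_iff]

lemma ae_eq_zero_iff (hT : IsIdealEmbedding T) {a : E} : ⇑(T a) =ᵐ[μ] 0 ↔ a = 0 := by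
  rw [← hT.ae_eq_iff, map_zero, AEEqFun.coeFn_zero.congr_right]

lemma ae_nonneg_iff (hT : IsIdealEmbedding T) {a : E} : 0 ≤ᵐ[μ] ⇑(T a) ↔ 0 ≤ a := by
  rw [← hT.ae_le_iff, map_zero]
  exact ⟨AEEqFun.coeFn_zero.le.trans, AEEqFun.coeFn_zero.symm.le.trans⟩

lemma ae_nonpos_iff (hT : IsIdealEmbedding T) {a : E} : ⇑(T a) ≤ᵐ[μ] 0 ↔ a ≤ 0 := by
  rw [← hT.ae_le_iff, map_zero]
  exact ⟨fun h => h.trans AEEqFun.coeFn_zero.symm.le, fun h => h.trans AEEqFun.coeFn_zero.le⟩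

lemma exists_ae_eq_indicator (hT : IsIdealEmbedding T) (g : E) {A : Set Ω}
    (hA : MeasurableSet A) : ∃ h : E, ⇑(T h) =ᵐ[μ] A.indicator (T g) := by
  have hm : AEStronglyMeasurable (A.indicator (T g)) μ := (T g).aestronglyMeasurable.indicator hA
  obtain ⟨h, hh⟩ := hT.exists_eq_of_abs_le (AEEqFun.mk _ hm) g <| by
    rw [← AEEqFun.coeFn_le]
    filter_upwards [AEEqFun.coeFn_abs (AEEqFun.mk _ hm), AEEqFun.coeFn_abs (T g),
      AEEqFun.coeFn_mk _ hm] with ω h₁ h₂ h₃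
    rw [h₁, h₂, h₃]
    by_cases hω : ω ∈ A <;> simp [hω]
  exact ⟨h, hh ▸ AEEqFun.coeFn_mk _ hm⟩

open Classical in
/-- The component `1_A g` of `g` on `A`; it is `0` when `A` is not measurable. -/
noncomputable def restrict (hT : IsIdealEmbedding T) (g : E) (A : Set Ω) : E :=
  if hA : MeasurableSet A then (hT.exists_ae_eq_indicator g hA).choose else 0

lemma coeFn_restrict (hT : IsIdealEmbedding T) (g : E) {A : Set Ω} (hA : MeasurableSet A) :
    ⇑(T (hT.restrict g A)) =ᵐ[μ] A.indicator (T g) := by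
  rw [restrict, dif_pos hA]
  exact (hT.exists_ae_eq_indicator g hA).choose_spec

lemma restrict_univ (hT : IsIdealEmbedding T) (g : E) : hT.restrict g univ = g := by
  rw [← hT.ae_eq_iff]
  simpa using hT.coeFn_restrict g .univ

lemma restrict_eq_zero_iff (hT : IsIdealEmbedding T) (g : E) {A : Set Ω}
    (hA : MeasurableSet A) : hT.restrict g A = 0 ↔ μ (A ∩ Function.support (T g)) = 0 := by
  rw [← hT.ae_eq_zero_iff, (hT.coeFn_restrict g hA).congr_left, indicator_ae_eq_zero]

lemma restrict_union (hT : IsIdealEmbedding T) (g : E) {A B : Set Ω} (hA : MeasurableSet A)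
    (hB : MeasurableSet B) (hAB : Disjoint A B) :
    hT.restrict g (A ∪ B) = hT.restrict g A + hT.restrict g B := by
  rw [← hT.ae_eq_iff, map_add]
  filter_upwards [hT.coeFn_restrict g (hA.union hB), hT.coeFn_restrict g hA,
    hT.coeFn_restrict g hB, AEEqFun.coeFn_add (T (hT.restrict g A)) (T (hT.restrict g B))]
    with ω h h₁ h₂ h₃
  rw [h, h₃, Pi.add_apply, h₁, h₂, indicator_union_of_disjoint hAB]

lemma exists_split_norm_restrict_pos (hT : IsIdealEmbedding T)
    (hna : ∀ A : Set Ω, MeasurableSet A → 0 < μ A →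
      ∃ B ⊆ A, MeasurableSet B ∧ 0 < μ B ∧ μ B < μ A)
    (g : E) {A : Set Ω} (hA : MeasurableSet A) (hpos : 0 < ‖hT.restrict g A‖) :
    ∃ B ⊆ A, MeasurableSet B ∧ 0 < ‖hT.restrict g B‖ ∧ 0 < ‖hT.restrict g (A \ B)‖ := by
  set S := Function.support (T g)
  have hS : MeasurableSet S := measurableSet_support (T g).measurable
  have hnorm_pos : ∀ {C}, MeasurableSet C → 0 < μ (C ∩ S) → 0 < ‖hT.restrict g C‖ :=
    fun hC h => norm_pos_iff.2 fun h0 => h.ne' ((hT.restrict_eq_zero_iff g hC).1 h0)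
  have hAS : 0 < μ (A ∩ S) := pos_iff_ne_zero.2 fun h => hpos.ne' <| by
    rw [(hT.restrict_eq_zero_iff g hA).2 h, norm_zero]
  obtain ⟨B, hBAS, hB, hBpos, hBlt⟩ := hna _ (hA.inter hS) hAS
  refine ⟨B, hBAS.trans inter_subset_left, hB, hnorm_pos hB ?_, hnorm_pos (hA.diff hB) ?_⟩
  · rwa [inter_eq_self_of_subset_left (hBAS.trans inter_subset_right)]
  · calc 0 < μ (A ∩ S) - μ B := tsub_pos_of_lt hBlt
      _ ≤ μ ((A ∩ S) \ B) := le_measure_sdiff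
      _ ≤ μ ((A \ B) ∩ S) := measure_mono fun ω ⟨⟨h₁, h₂⟩, h₃⟩ => ⟨⟨h₁, h₃⟩, h₂⟩

lemma restrict_nonneg (hT : IsIdealEmbedding T) {g : E} (hg : 0 ≤ g) (A : Set Ω) :
    0 ≤ hT.restrict g A := by
  by_cases hA : MeasurableSet A
  · rw [← hT.ae_nonneg_iff]
    filter_upwards [hT.coeFn_restrict g hA, hT.ae_nonneg_iff.2 hg] with ω h hφ
    rw [h]
    exact indicator_nonneg (fun _ _ => hφ) ω
  · rw [restrict, dif_neg hA]

lemma restrict_inf_restrict (hT : IsIdealEmbedding T) {g : E} (hg : 0 ≤ g) {A B : Set Ω}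
    (hA : MeasurableSet A) (hB : MeasurableSet B) (hAB : Disjoint A B) :
    hT.restrict g A ⊓ hT.restrict g B = 0 := by
  rw [← hT.ae_eq_zero_iff, hT.map_inf]
  filter_upwards [AEEqFun.coeFn_inf (T (hT.restrict g A)) (T (hT.restrict g B)),
    hT.coeFn_restrict g hA, hT.coeFn_restrict g hB, hT.ae_nonneg_iff.2 hg] with ω h h₁ h₂ hφ
  rw [h, h₁, h₂]
  by_cases hωA : ω ∈ A
  · simpa [hωA, Set.disjoint_left.1 hAB hωA] using hφ
  · by_cases hωB : ω ∈ B
    · simpa [hωA, hωB] using hφ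
    · simp [hωA, hωB]

variable [IsOrderedAddMonoid E]

lemma restrict_mono (hT : IsIdealEmbedding T) {g : E} (hg : 0 ≤ g) {A B : Set Ω}
    (hA : MeasurableSet A) (hB : MeasurableSet B) (hAB : A ⊆ B) :
    hT.restrict g A ≤ hT.restrict g B := by
  rw [← union_sdiff_cancel hAB, hT.restrict_union g hA (hB.diff hA) disjoint_sdiff_right]
  exact le_add_of_nonneg_right (hT.restrict_nonneg hg _)

lemma tendsto_norm_restrict (hT : IsIdealEmbedding T)
    (hoc : ∀ s : ℕ → E, Antitone s → IsGLB (Set.range s) 0 →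
      Tendsto (fun n => ‖s n‖) atTop (𝓝 0))
    {g : E} (hg : 0 ≤ g) {B : ℕ → Set Ω} (hB : ∀ n, MeasurableSet (B n)) (hanti : Antitone B)
    (hempty : ⋂ n, B n = ∅) : Tendsto (fun n => ‖hT.restrict g (B n)‖) atTop (𝓝 0) := by
  refine hoc _ (fun m n hmn => hT.restrict_mono hg (hB n) (hB m) (hanti hmn)) ⟨?_, fun c hc => ?_⟩
  · rintro _ ⟨n, rfl⟩
    exact hT.restrict_nonneg hg _
  · have hcB : ∀ n, ⇑(T c) ≤ᵐ[μ] (B n).indicator (T g) := fun n =>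
      (hT.ae_le_iff.2 (hc ⟨n, rfl⟩)).trans (hT.coeFn_restrict g (hB n)).le
    rw [← hT.ae_nonpos_iff]
    filter_upwards [ae_all_iff.2 hcB] with ω hω
    obtain ⟨n, hn⟩ : ∃ n, ω ∉ B n := by simpa using eq_empty_iff_forall_notMem.1 hempty ω
    simpa [hn] using hω n

lemma norm_restrict_rpow_add_le (hT : IsIdealEmbedding T) {q : ℝ}
    (hlow : ∀ a b : E, |a| ⊓ |b| = 0 → ‖a‖ ^ q + ‖b‖ ^ q ≤ ‖a + b‖ ^ q)
    {g : E} (hg : 0 ≤ g) {A B : Set Ω} (hA : MeasurableSet A) (hB : MeasurableSet B)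
    (hAB : Disjoint A B) :
    ‖hT.restrict g A‖ ^ q + ‖hT.restrict g B‖ ^ q ≤ ‖hT.restrict g (A ∪ B)‖ ^ q := by
  rw [hT.restrict_union g hA hB hAB]
  refine hlow _ _ ?_
  rw [abs_of_nonneg (hT.restrict_nonneg hg A), abs_of_nonneg (hT.restrict_nonneg hg B)]
  exact hT.restrict_inf_restrict hg hA hB hAB

variable [HasSolidNorm E]

lemma isMaharamSubmeasure_norm_restrict (hT : IsIdealEmbedding T)
    (hoc : ∀ s : ℕ → E, Antitone s → IsGLB (Set.range s) 0 →
      Tendsto (fun n => ‖s n‖) atTop (𝓝 0))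
    {g : E} (hg : 0 ≤ g) : IsMaharamSubmeasure fun A => ‖hT.restrict g A‖ := by
  have hmono : ∀ ⦃A B : Set Ω⦄, MeasurableSet A → MeasurableSet B → A ⊆ B →
      ‖hT.restrict g A‖ ≤ ‖hT.restrict g B‖ := fun A B hA hB hAB =>
    norm_le_norm_of_abs_le_abs <| by
      rw [abs_of_nonneg (hT.restrict_nonneg hg A), abs_of_nonneg (hT.restrict_nonneg hg B)]
      exact hT.restrict_mono hg hA hB hAB
  refine ⟨?_, hmono, fun A B hA hB => ?_, fun B hB hanti hempty =>
    hT.tendsto_norm_restrict hoc hg hB hanti hempty⟩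
  · rw [(hT.restrict_eq_zero_iff g .empty).2 (by simp), norm_zero]
  · rw [← union_sdiff_self, hT.restrict_union g hA (hB.diff hA) disjoint_sdiff_right]
    exact (norm_add_le _ _).trans (add_le_add le_rfl (hmono (hB.diff hA) hB sdiff_subset))

theorem exists_disjoint_add_eq_of_le_norm (hT : IsIdealEmbedding T)
    (hna : ∀ A : Set Ω, MeasurableSet A → 0 < μ A →
      ∃ B ⊆ A, MeasurableSet B ∧ 0 < μ B ∧ μ B < μ A)
    (hoc : ∀ s : ℕ → E, Antitone s → IsGLB (Set.range s) 0 →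
      Tendsto (fun n => ‖s n‖) atTop (𝓝 0))
    {q : ℝ} (hq : 0 < q) (hlow : ∀ a b : E, |a| ⊓ |b| = 0 → ‖a‖ ^ q + ‖b‖ ^ q ≤ ‖a + b‖ ^ q)
    {g : E} (hg : 0 ≤ g) {τ : ℝ} (hτ0 : 0 ≤ τ) (hτ : τ ≤ ‖g‖) :
    ∃ g₁ g₂ : E, 0 ≤ g₁ ∧ 0 ≤ g₂ ∧ g₁ ⊓ g₂ = 0 ∧ g₁ + g₂ = g ∧ ‖g₁‖ = τ := by
  obtain ⟨U, hU, hUτ⟩ := (hT.isMaharamSubmeasure_norm_restrict hoc hg).exists_apply_eq hq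
    (fun A B hA hB hAB => hT.norm_restrict_rpow_add_le hlow hg hA hB hAB)
    (fun A hA hpos => hT.exists_split_norm_restrict_pos hna g hA hpos) hτ0
    (by rwa [hT.restrict_univ])
  refine ⟨_, _, hT.restrict_nonneg hg U, hT.restrict_nonneg hg Uᶜ,
    hT.restrict_inf_restrict hg hU hU.compl disjoint_compl_right, ?_, hUτ⟩
  rw [← hT.restrict_union g hU hU.compl disjoint_compl_right, union_compl_self, hT.restrict_univ]

end IsIdealEmbedding

end IdealEmbedding

lemma div_rpow_add_div_rpow_le {x y z δ q : ℝ} (hx : 0 ≤ x) (hy : 0 ≤ y) (hz : 0 ≤ z)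
    (hδ : 0 < δ) (h : x ^ q + y ^ q ≤ z ^ q) : (x / δ) ^ q + (y / δ) ^ q ≤ (z / δ) ^ q := by
  rw [Real.div_rpow hx hδ.le, Real.div_rpow hy hδ.le, Real.div_rpow hz hδ.le, ← add_div]
  gcongr

lemma norm_rpow_add_norm_rpow_le {E : Type*} [NormedAddCommGroup E] [Lattice E] {q : ℝ}
    (hlow : ∀ (m : ℕ) (fi : Fin m → E),
      (Pairwise fun i j => |fi i| ⊓ |fi j| = 0) → ∑ i, ‖fi i‖ ^ q ≤ ‖∑ i, fi i‖ ^ q)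
    {a b : E} (hab : |a| ⊓ |b| = 0) : ‖a‖ ^ q + ‖b‖ ^ q ≤ ‖a + b‖ ^ q := by
  have := hlow 2 ![a, b] (by intro i j hij; fin_cases i <;> fin_cases j <;> simp_all [inf_comm])
  simpa [Fin.sum_univ_two] using this

structure IsValuation {E : Type*} [Lattice E] [Zero E] (V : E → ℝ) : Prop where
  map_sup_add_map_inf : ∀ f g, V (f ⊔ g) + V (f ⊓ g) = V f + V g
  map_zero : V 0 = 0

namespace IsValuation

section LatticeOrderedGroup

variable {E : Type*} [Lattice E] [AddCommGroup E] [IsOrderedAddMonoid E] {V : E → ℝ}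

lemma comp_neg (hV : IsValuation V) : IsValuation fun f => V (-f) where
  map_sup_add_map_inf f g := by
    rw [neg_sup, neg_inf, add_comm]
    exact hV.map_sup_add_map_inf (-f) (-g)
  map_zero := by rw [neg_zero, hV.map_zero]

lemma map_add_of_inf_eq_zero (hV : IsValuation V) {a b : E} (hab : a ⊓ b = 0) :
    V (a + b) = V a + V b := by
  have hsup : a ⊔ b = a + b := by rw [← inf_add_sup a b, hab, zero_add]
  rw [← hsup, ← hV.map_sup_add_map_inf, hab, hV.map_zero, add_zero]

lemma map_eq_posPart_add_negPart (hV : IsValuation V) (f : E) : V f = V f⁺ + V (-f⁻) := by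
  have := hV.map_sup_add_map_inf f 0
  rw [hV.map_zero, add_zero] at this
  rw [← this, posPart_def, negPart_def, neg_sup, neg_neg, neg_zero]

end LatticeOrderedGroup

variable {E : Type*} [NormedAddCommGroup E] [Lattice E] [IsOrderedAddMonoid E] {V : E → ℝ}

theorem abs_le_div_rpow_add_one (hV : IsValuation V) {q δ : ℝ} (hq : 0 < q) (hδ : 0 < δ)
    (hVδ : ∀ f : E, ‖f‖ ≤ δ → |V f| ≤ 1)
    (hlow : ∀ a b : E, |a| ⊓ |b| = 0 → ‖a‖ ^ q + ‖b‖ ^ q ≤ ‖a + b‖ ^ q)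
    (hsplit : ∀ g : E, 0 ≤ g → δ < ‖g‖ →
      ∃ g₁ g₂ : E, 0 ≤ g₁ ∧ 0 ≤ g₂ ∧ g₁ ⊓ g₂ = 0 ∧ g₁ + g₂ = g ∧ ‖g₁‖ = δ)
    {g : E} (hg : 0 ≤ g) : |V g| ≤ (‖g‖ / δ) ^ q + 1 := by
  have hsmall : ∀ {g : E}, ‖g‖ ≤ δ → |V g| ≤ (‖g‖ / δ) ^ q + 1 := fun hgδ =>
    (hVδ _ hgδ).trans (le_add_of_nonneg_left (by positivity))
  obtain ⟨n, hn⟩ := exists_nat_ge ((‖g‖ / δ) ^ q)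
  induction n generalizing g with
  | zero =>
    refine hsmall (not_lt.1 fun hgδ => ?_)
    have := Real.one_lt_rpow ((one_lt_div hδ).2 hgδ) hq
    push_cast at hn
    linarith
  | succ n ih =>
    rcases le_or_gt ‖g‖ δ with hgδ | hgδ
    · exact hsmall hgδ
    obtain ⟨g₁, g₂, hg₁, hg₂, hinf, rfl, hnorm⟩ := hsplit g hg hgδ
    have hdecr : 1 + (‖g₂‖ / δ) ^ q ≤ (‖g₁ + g₂‖ / δ) ^ q := by
      have := div_rpow_add_div_rpow_le (norm_nonneg g₁) (norm_nonneg g₂) (norm_nonneg _) hδ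
        (hlow g₁ g₂ (by rwa [abs_of_nonneg hg₁, abs_of_nonneg hg₂]))
      rwa [hnorm, div_self hδ.ne', Real.one_rpow] at this
    have h₂ := ih hg₂ (by push_cast at hn; linarith)
    rw [hV.map_add_of_inf_eq_zero hinf]
    calc |V g₁ + V g₂| ≤ |V g₁| + |V g₂| := abs_add_le _ _
      _ ≤ 1 + ((‖g₂‖ / δ) ^ q + 1) := add_le_add (hVδ g₁ hnorm.le) h₂
      _ ≤ (‖g₁ + g₂‖ / δ) ^ q + 1 := by linarith

end IsValuation

theorem stmt14_general {Ω : Type*} [MeasurableSpace Ω] (μ : Measure Ω)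
    (hna : ∀ A : Set Ω, MeasurableSet A → 0 < μ A →
      ∃ B ⊆ A, MeasurableSet B ∧ 0 < μ B ∧ μ B < μ A)
    {E : Type*} [NormedAddCommGroup E] [Lattice E] [HasSolidNorm E]
    [IsOrderedAddMonoid E] [NormedSpace ℝ E]
    (T : E →ₗ[ℝ] (Ω →ₘ[μ] ℝ)) (hTinj : Function.Injective T)
    (hTsup : ∀ f g : E, T (f ⊔ g) = T f ⊔ T g)
    (hTinf : ∀ f g : E, T (f ⊓ g) = T f ⊓ T g)
    (hideal : ∀ (g : Ω →ₘ[μ] ℝ) (f : E), |g| ≤ |T f| → ∃ h : E, T h = g)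
    (hoc : ∀ s : ℕ → E, Antitone s → IsGLB (Set.range s) 0 →
      Tendsto (fun n => ‖s n‖) atTop (nhds 0))
    (q : ℝ) (hq : 1 ≤ q)
    (hlow : ∀ (m : ℕ) (fi : Fin m → E),
      (Pairwise fun i j => |fi i| ⊓ |fi j| = 0) →
      ∑ i, ‖fi i‖ ^ q ≤ ‖∑ i, fi i‖ ^ q)
    (V : E → ℝ)
    (hV : ∀ f g : E, V (f ⊔ g) + V (f ⊓ g) = V f + V g) (hV0 : V 0 = 0)
    (δ : ℝ) (hδ : 0 < δ) (hVδ : ∀ f : E, ‖f‖ ≤ δ → |V f| ≤ 1) :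
    ∀ f : E, |V f| ≤ (‖f‖ / δ) ^ q + 2 := by
  intro f
  have hq0 : 0 < q := by linarith
  have hT : IsIdealEmbedding T := ⟨hTinj, hTsup, hTinf, hideal⟩
  have hVal : IsValuation V := ⟨hV, hV0⟩
  have hlow₂ : ∀ a b : E, |a| ⊓ |b| = 0 → ‖a‖ ^ q + ‖b‖ ^ q ≤ ‖a + b‖ ^ q :=
    fun a b => norm_rpow_add_norm_rpow_le hlow
  have hsplit : ∀ g : E, 0 ≤ g → δ < ‖g‖ →
      ∃ g₁ g₂ : E, 0 ≤ g₁ ∧ 0 ≤ g₂ ∧ g₁ ⊓ g₂ = 0 ∧ g₁ + g₂ = g ∧ ‖g₁‖ = δ :=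
    fun g hg hgδ => hT.exists_disjoint_add_eq_of_le_norm hna hoc hq0 hlow₂ hg hδ.le hgδ.le
  have hpos := hVal.abs_le_div_rpow_add_one hq0 hδ hVδ hlow₂ hsplit (posPart_nonneg f)
  have hneg := hVal.comp_neg.abs_le_div_rpow_add_one hq0 hδ
    (fun g hg => hVδ (-g) (by rwa [norm_neg])) hlow₂ hsplit (negPart_nonneg f)
  have hparts : (‖f⁺‖ / δ) ^ q + (‖f⁻‖ / δ) ^ q ≤ (‖f‖ / δ) ^ q := by
    have := hlow₂ f⁺ (-f⁻) <| by
      rw [abs_neg, abs_of_nonneg (posPart_nonneg f), abs_of_nonneg (negPart_nonneg f),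
        posPart_inf_negPart_eq_zero]
    rw [norm_neg, ← sub_eq_add_neg, posPart_sub_negPart] at this
    exact div_rpow_add_div_rpow_le (norm_nonneg _) (norm_nonneg _) (norm_nonneg _) hδ this
  rw [hVal.map_eq_posPart_add_negPart f]
  linarith [abs_add_le (V f⁺) (V (-f⁻))]

/-- An order continuous Banach lattice `E` of measurable functions
over a purely nonatomic σ-finite measure space (realized as an ideal in
`L⁰(μ)` via a lattice embedding `T`), satisfying a lower `q`-estimate with
constant 1. If `V` is a valuation continuous at `0` with `|V f| ≤ 1` whenever
`‖f‖ ≤ δ`, then `|V f| ≤ (‖f‖/δ)^q + 2` for every `f`; in particular `V` is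
bounded on norm-bounded sets. -/
theorem stmt14 {Ω : Type*} [MeasurableSpace Ω] (μ : Measure Ω) [SigmaFinite μ]
    (hna : ∀ A : Set Ω, MeasurableSet A → 0 < μ A →
      ∃ B ⊆ A, MeasurableSet B ∧ 0 < μ B ∧ μ B < μ A)
    {E : Type*} [NormedAddCommGroup E] [Lattice E] [HasSolidNorm E]
    [IsOrderedAddMonoid E] [CompleteSpace E] [NormedSpace ℝ E]
    (T : E →ₗ[ℝ] (Ω →ₘ[μ] ℝ)) (hTinj : Function.Injective T)
    (hTsup : ∀ f g : E, T (f ⊔ g) = T f ⊔ T g)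
    (hTinf : ∀ f g : E, T (f ⊓ g) = T f ⊓ T g)
    (hideal : ∀ (g : Ω →ₘ[μ] ℝ) (f : E), |g| ≤ |T f| → ∃ h : E, T h = g)
    (hindic : ∀ (A : Set Ω) (hA : MeasurableSet A), μ A < ⊤ →
      ∃ h : E, T h = AEEqFun.mk (A.indicator fun _ => (1 : ℝ))
        ((measurable_const.indicator hA).aestronglyMeasurable))
    (hoc : ∀ s : ℕ → E, Antitone s → IsGLB (Set.range s) 0 →
      Tendsto (fun n => ‖s n‖) atTop (nhds 0))
    (q : ℝ) (hq : 1 ≤ q)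
    (hlow : ∀ (m : ℕ) (fi : Fin m → E),
      (Pairwise fun i j => |fi i| ⊓ |fi j| = 0) →
      ∑ i, ‖fi i‖ ^ q ≤ ‖∑ i, fi i‖ ^ q)
    (V : E → ℝ)
    (hV : ∀ f g : E, V (f ⊔ g) + V (f ⊓ g) = V f + V g) (hV0 : V 0 = 0)
    (hVcont : ContinuousAt V 0)
    (δ : ℝ) (hδ : 0 < δ) (hVδ : ∀ f : E, ‖f‖ ≤ δ → |V f| ≤ 1) :
    ∀ f : E, |V f| ≤ (‖f‖ / δ) ^ q + 2 :=
  stmt14_general μ hna T hTinj hTsup hTinf hideal hoc q hq hlow V hV hV0 δ hδ hVδ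
end
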